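/- arXiv:2212.05371 — 8 statements merged into one kernel-verified Lean document; each statement's English description precedes it below -/
import Mathlib

section
/- Let f : A → B be a contraction between Hilbert spaces, and set D_f = √(id − f† f) and D_{f†} = √(id − f f†) (positive square roots of the positive operators id − f†f and id − ff†). Then the block operator g : B ⊕ A → A ⊕ B given by g = [[−f†, D_f], [D_{f†}, f]] is an isometry, i.e. g†g = id. (Uses the intertwining identity f ∘ D_f = D_{f†} ∘ f.) -/
/-!
Expanding `‖g (b, a)‖²`, the diagonal terms sum to `‖a‖² + ‖b‖²` because
`D_f† D_f + f† f = 1` and `D_{f†}† D_{f†} + f f† = 1`, while the cross terms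
`-2 re ⟪D_f a, f† b⟫` and `2 re ⟪D_{f†} b, f a⟫` cancel by the intertwining `f D_f = D_{f†} f`.
That identity holds because `f D_f² = D_{f†}² f` and a positive operator is a continuous function
of its square.
-/

open ContinuousLinearMap

theorem Commute.of_mul_self_left {A : Type*} [CStarAlgebra A] [PartialOrder A] [StarOrderedRing A]
    {a b : A} (ha : 0 ≤ a) (h : Commute (a * a) b) : Commute a b := by
  rw [← CFC.sqrt_mul_self a, CFC.sqrt_eq_cfc]
  exact h.cfc_nnreal _

namespace ContinuousLinearMap

section Block

variable {E F : Type*} [NormedAddCommGroup E] [InnerProductSpace ℂ E]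
  [NormedAddCommGroup F] [InnerProductSpace ℂ F]

noncomputable def diagL2 (S : E →L[ℂ] E) (T : F →L[ℂ] F) :
    WithLp 2 (E × F) →L[ℂ] WithLp 2 (E × F) :=
  let e := WithLp.prodContinuousLinearEquiv 2 ℂ E F
  e.symm.toContinuousLinearMap ∘L S.prodMap T ∘L e.toContinuousLinearMap

noncomputable def lowerLeftL2 (f : E →L[ℂ] F) : WithLp 2 (E × F) →L[ℂ] WithLp 2 (E × F) :=
  let e := WithLp.prodContinuousLinearEquiv 2 ℂ E F
  e.symm.toContinuousLinearMap ∘L (inr ℂ E F ∘L f ∘L fst ℂ E F) ∘L e.toContinuousLinearMap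

@[simp] theorem diagL2_apply (S : E →L[ℂ] E) (T : F →L[ℂ] F) (x : WithLp 2 (E × F)) :
    diagL2 S T x = WithLp.toLp 2 (S x.fst, T x.snd) := rfl

@[simp] theorem lowerLeftL2_apply (f : E →L[ℂ] F) (x : WithLp 2 (E × F)) :
    lowerLeftL2 f x = WithLp.toLp 2 (0, f x.fst) := rfl

theorem IsPositive.diagL2 {S : E →L[ℂ] E} {T : F →L[ℂ] F} (hS : S.IsPositive)
    (hT : T.IsPositive) : (diagL2 S T).IsPositive := by
  refine ⟨fun x y => ?_, fun x => ?_⟩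
  · simp [hS.inner_left_eq_inner_right, hT.inner_left_eq_inner_right]
  · simpa [reApplyInnerSelf] using add_nonneg (hS.2 x.fst) (hT.2 x.snd)

/-- The block operators `[[S, 0], [0, T]]` and `[[0, 0], [f, 0]]` on `E ⊕ F` commute once `S` and
`T` are squared, hence already before. -/
theorem comp_eq_comp_of_comp_sq_eq [CompleteSpace E] [CompleteSpace F]
    {S : E →L[ℂ] E} {T : F →L[ℂ] F} (hS : S.IsPositive) (hT : T.IsPositive) {f : E →L[ℂ] F}
    (h : f ∘L (S ∘L S) = (T ∘L T) ∘L f) : f ∘L S = T ∘L f := by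
  have hsq : Commute (diagL2 S T * diagL2 S T) (lowerLeftL2 f) := by
    ext x : 1
    simpa using congr($h x.fst).symm
  have hcomm := Commute.of_mul_self_left ((nonneg_iff_isPositive _).2 (hS.diagL2 hT)) hsq
  ext a
  simpa using congr(($hcomm.eq (WithLp.toLp 2 (a, 0))).snd).symm

end Block

theorem norm_sq_add_norm_sq_eq {E F G : Type*} [NormedAddCommGroup E] [InnerProductSpace ℂ E]
    [CompleteSpace E] [NormedAddCommGroup F] [InnerProductSpace ℂ F] [CompleteSpace F]
    [NormedAddCommGroup G] [InnerProductSpace ℂ G] [CompleteSpace G]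
    {S : E →L[ℂ] F} {f : E →L[ℂ] G} (h : adjoint S ∘L S + adjoint f ∘L f = 1) (x : E) :
    ‖S x‖ ^ 2 + ‖f x‖ ^ 2 = ‖x‖ ^ 2 := by
  rw [apply_norm_sq_eq_inner_adjoint_left, apply_norm_sq_eq_inner_adjoint_left, ← map_add,
    ← inner_add_left, ← add_apply, h, one_apply_eq_self, inner_self_eq_norm_sq]

end ContinuousLinearMap

theorem stmt4_general {A B : Type*}
    [NormedAddCommGroup A] [InnerProductSpace ℂ A] [CompleteSpace A]
    [NormedAddCommGroup B] [InnerProductSpace ℂ B] [CompleteSpace B]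
    (f : A →L[ℂ] B)
    (Df : A →L[ℂ] A) (Dft : B →L[ℂ] B)
    (hDf_pos : Df.IsPositive) (hDft_pos : Dft.IsPositive)
    (hDf_sq : Df ∘L Df = 1 - ContinuousLinearMap.adjoint f ∘L f)
    (hDft_sq : Dft ∘L Dft = 1 - f ∘L ContinuousLinearMap.adjoint f) :
    ∀ (b : B) (a : A),
      ‖(WithLp.equiv 2 (A × B)).symm (-(ContinuousLinearMap.adjoint f b) + Df a, Dft b + f a)‖
        = ‖(WithLp.equiv 2 (B × A)).symm (b, a)‖ := by
  have hintertwine : f ∘L Df = Dft ∘L f := comp_eq_comp_of_comp_sq_eq hDf_pos hDft_pos <| by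
    rw [hDf_sq, hDft_sq, comp_sub, sub_comp, comp_assoc]
    rfl
  have hnorm_Df (a : A) : ‖Df a‖ ^ 2 + ‖f a‖ ^ 2 = ‖a‖ ^ 2 :=
    norm_sq_add_norm_sq_eq (by rw [hDf_pos.isSelfAdjoint.adjoint_eq, hDf_sq, sub_add_cancel]) a
  have hnorm_Dft (b : B) : ‖Dft b‖ ^ 2 + ‖adjoint f b‖ ^ 2 = ‖b‖ ^ 2 :=
    norm_sq_add_norm_sq_eq
      (by rw [hDft_pos.isSelfAdjoint.adjoint_eq, hDft_sq, adjoint_adjoint, sub_add_cancel]) b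
  have hcross (b : B) (a : A) :
      RCLike.re (inner ℂ (Df a) (adjoint f b)) = RCLike.re (inner ℂ (Dft b) (f a)) := by
    rw [adjoint_inner_right, ← comp_apply f Df, hintertwine, comp_apply,
      hDft_pos.inner_left_eq_inner_right, inner_re_symm]
  intro b a
  rw [← sq_eq_sq₀ (norm_nonneg _) (norm_nonneg _), WithLp.prod_norm_sq_eq_of_L2,
    WithLp.prod_norm_sq_eq_of_L2]
  simp only [WithLp.equiv_symm_apply, WithLp.toLp_fst, WithLp.toLp_snd]
  rw [neg_add_eq_sub, norm_sub_sq (𝕜 := ℂ), norm_add_sq (𝕜 := ℂ), hcross]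
  linear_combination hnorm_Df a + hnorm_Dft b

/-- Halmos dilation: for a contraction `f : A → B` between Hilbert spaces, with
`D_f = √(id − f†f)` and `D_{f†} = √(id − ff†)` (the positive square roots),
the block operator `g = [[−f†, D_f], [D_{f†}, f]] : B ⊕ A → A ⊕ B` is an isometry. -/
theorem stmt4 {A B : Type*}
    [NormedAddCommGroup A] [InnerProductSpace ℂ A] [CompleteSpace A]
    [NormedAddCommGroup B] [InnerProductSpace ℂ B] [CompleteSpace B]
    (f : A →L[ℂ] B) (hf : ‖f‖ ≤ 1)
    (Df : A →L[ℂ] A) (Dft : B →L[ℂ] B)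
    (hDf_pos : Df.IsPositive) (hDft_pos : Dft.IsPositive)
    (hDf_sq : Df ∘L Df = 1 - ContinuousLinearMap.adjoint f ∘L f)
    (hDft_sq : Dft ∘L Dft = 1 - f ∘L ContinuousLinearMap.adjoint f) :
    ∀ (b : B) (a : A),
      ‖(WithLp.equiv 2 (A × B)).symm (-(ContinuousLinearMap.adjoint f b) + Df a, Dft b + f a)‖
        = ‖(WithLp.equiv 2 (B × A)).symm (b, a)‖ :=
  stmt4_general f Df Dft hDf_pos hDft_pos hDf_sq hDft_sq
end

section
/- Let f : A ⊕ U → B ⊕ U be an isometry of Hilbert spaces with block decomposition f = [[a, b], [c, d]] where a = f_{BA}, b = f_{BU}, c = f_{UA}, d = f_{UU}. If id_U − d is invertible (with bounded inverse), then the map h = a + b ∘ (id − d)⁻¹ ∘ c : A → B is an isometry. -/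
/-! Put `u := e (c x)`; since `(1 - d) ∘ e = 1`, `u = c x + d u`. Then `f (x, u) = (h x, u)`, and
since `f` preserves the `ℓ²` norm, `‖h x‖² + ‖u‖² = ‖x‖² + ‖u‖²`. -/

open WithLp

lemma norm_eq_of_norm_map_toLp_prod_eq {A U B : Type*}
    [SeminormedAddCommGroup A] [SeminormedAddCommGroup U] [SeminormedAddCommGroup B]
    {f : WithLp 2 (A × U) → WithLp 2 (B × U)} (hf : ∀ v, ‖f v‖ = ‖v‖)
    {x : A} {y : B} {u : U} (hxy : f (toLp 2 (x, u)) = toLp 2 (y, u)) :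
    ‖y‖ = ‖x‖ := by
  have hsq : ‖y‖ ^ 2 + ‖u‖ ^ 2 = ‖x‖ ^ 2 + ‖u‖ ^ 2 := by
    have := congrArg (· ^ 2) (hf (toLp 2 (x, u)))
    simpa only [hxy, prod_norm_sq_eq_of_L2, toLp_fst, toLp_snd] using this
  exact (pow_left_inj₀ (norm_nonneg y) (norm_nonneg x) two_ne_zero).mp (add_right_cancel hsq)

lemma ContinuousLinearMap.add_apply_eq_self_of_comp_sub_eq_one {R U : Type*} [Ring R]
    [TopologicalSpace U] [AddCommGroup U] [IsTopologicalAddGroup U] [Module R U]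
    {d e : U →L[R] U} (he : (1 - d) ∘L e = 1) (v : U) : v + d (e v) = e v := by
  have hv : e v - d (e v) = v := congrArg (· v) he
  calc v + d (e v) = e v - d (e v) + d (e v) := by rw [hv]
    _ = e v := sub_add_cancel _ _

theorem stmt5_general {A U B : Type*}
    [NormedAddCommGroup A] [InnerProductSpace ℂ A]
    [NormedAddCommGroup U] [InnerProductSpace ℂ U]
    [NormedAddCommGroup B] [InnerProductSpace ℂ B]
    (f : WithLp 2 (A × U) →L[ℂ] WithLp 2 (B × U))
    (a : A →L[ℂ] B) (b : U →L[ℂ] B) (c : A →L[ℂ] U) (d : U →L[ℂ] U)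
    (hblock : ∀ (x : A) (u : U),
        f ((WithLp.equiv 2 (A × U)).symm (x, u))
          = (WithLp.equiv 2 (B × U)).symm (a x + b u, c x + d u))
    (hf : ∀ v, ‖f v‖ = ‖v‖)
    (e : U →L[ℂ] U) (he₁ : (1 - d) ∘L e = 1) :
    ∀ x : A, ‖(a + b ∘L e ∘L c) x‖ = ‖x‖ := by
  intro x
  refine norm_eq_of_norm_map_toLp_prod_eq hf (u := e (c x)) ?_
  have hfix := ContinuousLinearMap.add_apply_eq_self_of_comp_sub_eq_one he₁ (c x)
  simpa only [equiv_symm_apply, hfix, add_apply,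
    ContinuousLinearMap.comp_apply] using hblock x (e (c x))

/-- If `f : A ⊕ U → B ⊕ U` is an isometry of Hilbert spaces with block decomposition
`[[a, b], [c, d]]` and `id − d` is invertible with bounded inverse `e`, then
`h = a + b ∘ (id − d)⁻¹ ∘ c` is an isometry. -/
theorem stmt5 {A U B : Type*}
    [NormedAddCommGroup A] [InnerProductSpace ℂ A]
    [NormedAddCommGroup U] [InnerProductSpace ℂ U]
    [NormedAddCommGroup B] [InnerProductSpace ℂ B]
    (f : WithLp 2 (A × U) →L[ℂ] WithLp 2 (B × U))
    (a : A →L[ℂ] B) (b : U →L[ℂ] B) (c : A →L[ℂ] U) (d : U →L[ℂ] U)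
    (hblock : ∀ (x : A) (u : U),
        f ((WithLp.equiv 2 (A × U)).symm (x, u))
          = (WithLp.equiv 2 (B × U)).symm (a x + b u, c x + d u))
    (hf : ∀ v, ‖f v‖ = ‖v‖)
    (e : U →L[ℂ] U) (he₁ : (1 - d) ∘L e = 1) (he₂ : e ∘L (1 - d) = 1) :
    ∀ x : A, ‖(a + b ∘L e ∘L c) x‖ = ‖x‖ :=
  stmt5_general f a b c d hblock hf e he₁
end

section
/- Let f : A ⊕ U → B ⊕ U be a contraction of Hilbert spaces with block decomposition f_{BA}, f_{BU}, f_{UA}, f_{UU}. If id_U − f_{UU} is invertible, then h = f_{BA} + f_{BU} ∘ (id − f_{UU})⁻¹ ∘ f_{UA} is a contraction. -/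
/-!
Put `u := e (f_{UA} x)`. Then `u = f_{UA} x + f_{UU} u`, so `f` maps `(x, u)` to `(h x, u)`:
the feedback component is a fixed point of the loop. Since `f` is a contraction,
`‖h x‖² + ‖u‖² ≤ ‖x‖² + ‖u‖²`, i.e. `‖h x‖ ≤ ‖x‖`.
-/

theorem WithLp.norm_le_of_norm_toLp_prod_le {E E' F : Type*}
    [SeminormedAddCommGroup E] [SeminormedAddCommGroup E'] [SeminormedAddCommGroup F]
    {x : E} {y : E'} (u : F)
    (h : ‖WithLp.toLp 2 (y, u)‖ ≤ ‖WithLp.toLp 2 (x, u)‖) : ‖y‖ ≤ ‖x‖ := by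
  have hsq : ‖y‖ ^ 2 + ‖u‖ ^ 2 ≤ ‖x‖ ^ 2 + ‖u‖ ^ 2 := by
    simpa only [WithLp.prod_norm_sq_eq_of_L2, WithLp.toLp_fst, WithLp.toLp_snd] using
      pow_le_pow_left₀ (norm_nonneg _) h 2
  exact pow_le_pow_iff_left₀ (norm_nonneg _) (norm_nonneg _) two_ne_zero |>.mp (by linarith)

theorem ContinuousLinearMap.apply_eq_add_of_one_sub_comp_eq_one {R M : Type*} [Ring R]
    [TopologicalSpace M] [AddCommGroup M] [Module R M] [IsTopologicalAddGroup M]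
    {g e : M →L[R] M} (h : (1 - g) ∘L e = 1) (v : M) : e v = v + g (e v) := by
  refine eq_add_of_sub_eq ?_
  simpa using congr($h v)

theorem stmt6_general {A U B : Type*}
    [NormedAddCommGroup A] [InnerProductSpace ℂ A]
    [NormedAddCommGroup U] [InnerProductSpace ℂ U]
    [NormedAddCommGroup B] [InnerProductSpace ℂ B]
    (f : WithLp 2 (A × U) →L[ℂ] WithLp 2 (B × U))
    (fBA : A →L[ℂ] B) (fBU : U →L[ℂ] B) (fUA : A →L[ℂ] U) (fUU : U →L[ℂ] U)
    (hblock : ∀ (x : A) (u : U),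
        f ((WithLp.equiv 2 (A × U)).symm (x, u))
          = (WithLp.equiv 2 (B × U)).symm (fBA x + fBU u, fUA x + fUU u))
    (hf : ∀ v, ‖f v‖ ≤ ‖v‖)
    (e : U →L[ℂ] U) (he₁ : (1 - fUU) ∘L e = 1) :
    ∀ x : A, ‖(fBA + fBU ∘L e ∘L fUA) x‖ ≤ ‖x‖ := by
  intro x
  have hloop : f (WithLp.toLp 2 (x, e (fUA x)))
      = WithLp.toLp 2 ((fBA + fBU ∘L e ∘L fUA) x, e (fUA x)) := by
    have hblock_x := hblock x (e (fUA x))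
    rwa [← ContinuousLinearMap.apply_eq_add_of_one_sub_comp_eq_one he₁] at hblock_x
  refine WithLp.norm_le_of_norm_toLp_prod_le (e (fUA x)) ?_
  rw [← hloop]
  exact hf _

/-- If `f : A ⊕ U → B ⊕ U` is a contraction of Hilbert spaces with block decomposition
`f_{BA}, f_{BU}, f_{UA}, f_{UU}` and `id − f_{UU}` is invertible with bounded inverse `e`,
then `h = f_{BA} + f_{BU} ∘ (id − f_{UU})⁻¹ ∘ f_{UA}` is a contraction. -/
theorem stmt6 {A U B : Type*}
    [NormedAddCommGroup A] [InnerProductSpace ℂ A]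
    [NormedAddCommGroup U] [InnerProductSpace ℂ U]
    [NormedAddCommGroup B] [InnerProductSpace ℂ B]
    (f : WithLp 2 (A × U) →L[ℂ] WithLp 2 (B × U))
    (fBA : A →L[ℂ] B) (fBU : U →L[ℂ] B) (fUA : A →L[ℂ] U) (fUU : U →L[ℂ] U)
    (hblock : ∀ (x : A) (u : U),
        f ((WithLp.equiv 2 (A × U)).symm (x, u))
          = (WithLp.equiv 2 (B × U)).symm (fBA x + fBU u, fUA x + fUU u))
    (hf : ∀ v, ‖f v‖ ≤ ‖v‖)
    (e : U →L[ℂ] U) (he₁ : (1 - fUU) ∘L e = 1) (he₂ : e ∘L (1 - fUU) = 1) :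
    ∀ x : A, ‖(fBA + fBU ∘L e ∘L fUA) x‖ ≤ ‖x‖ :=
  stmt6_general f fBA fBU fUA fUU hblock hf e he₁
end

section
/- Let f : A ⊕ U → B ⊕ U be a contraction of Hilbert spaces with blocks f_{BU} : U → B and f_{UU} : U → U. Then for every u ∈ U, lim_{n→∞} ‖f_{BU} ∘ f_{UU}^n (u)‖ = 0, i.e. f_{BU} f_{UU}^n converges to 0 in the strong operator topology. -/
/-!
Testing the contraction `f` on `(0, u)` gives the column inequality
`‖f_{BU} u‖² + ‖f_{UU} u‖² ≤ ‖u‖²`. Along the orbit `uₙ = f_{UU}ⁿ u` the squared norms `‖uₙ‖²`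
therefore decrease to a limit, and `‖f_{BU} uₙ‖²` is squeezed by their successive differences.
-/

open Filter Topology

theorem tendsto_sub_succ_of_antitone {a : ℕ → ℝ} (ha : Antitone a) (hbdd : BddBelow (Set.range a)) :
    Tendsto (fun n => a n - a (n + 1)) atTop (𝓝 0) := by
  have hlim := tendsto_atTop_ciInf ha hbdd
  simpa using hlim.sub (hlim.comp (tendsto_add_atTop_nat 1))

theorem tendsto_norm_comp_iterate_of_norm_sq_add_le {E F : Type*} [Norm E] [SeminormedAddGroup F]
    {b : E → F} {g : E → E} (h : ∀ x, ‖b x‖ ^ 2 + ‖g x‖ ^ 2 ≤ ‖x‖ ^ 2) (x : E) :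
    Tendsto (fun n => ‖b (g^[n] x)‖) atTop (𝓝 0) := by
  have hstep (n : ℕ) : ‖b (g^[n] x)‖ ^ 2 + ‖g^[n + 1] x‖ ^ 2 ≤ ‖g^[n] x‖ ^ 2 := by
    rw [Function.iterate_succ_apply']
    exact h _
  have hanti : Antitone fun n => ‖g^[n] x‖ ^ 2 :=
    antitone_nat_of_succ_le fun n => by linarith [hstep n, sq_nonneg ‖b (g^[n] x)‖]
  have hsq : Tendsto (fun n => ‖b (g^[n] x)‖ ^ 2) atTop (𝓝 0) :=
    squeeze_zero (fun n => by positivity) (fun n => by linarith [hstep n])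
      (tendsto_sub_succ_of_antitone hanti ⟨0, by rintro _ ⟨n, rfl⟩; positivity⟩)
  simpa only [Real.sqrt_sq_eq_abs, abs_norm, Real.sqrt_zero] using hsq.sqrt

theorem WithLp.norm_sq_add_norm_sq_le_of_contraction {E F G H : Type*}
    [SeminormedAddCommGroup E] [SeminormedAddCommGroup F]
    [SeminormedAddCommGroup G] [SeminormedAddCommGroup H]
    {f : WithLp 2 (E × F) → WithLp 2 (G × H)} (hf : ∀ v, ‖f v‖ ≤ ‖v‖)
    {x : E} {y : F} {z : G} {w : H} (hxy : f (WithLp.toLp 2 (x, y)) = WithLp.toLp 2 (z, w)) :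
    ‖z‖ ^ 2 + ‖w‖ ^ 2 ≤ ‖x‖ ^ 2 + ‖y‖ ^ 2 := by
  have := pow_le_pow_left₀ (norm_nonneg _) (hf (WithLp.toLp 2 (x, y))) 2
  simpa only [hxy, WithLp.prod_norm_sq_eq_of_L2, WithLp.toLp_fst, WithLp.toLp_snd] using this

/-- If `f : A ⊕ U → B ⊕ U` is a contraction of Hilbert spaces with blocks
`f_{BU} : U → B` and `f_{UU} : U → U`, then `f_{BU} ∘ f_{UU}ⁿ → 0` in the strong operator
topology, i.e. `‖f_{BU}(f_{UU}ⁿ(u))‖ → 0` for every `u ∈ U`. -/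
theorem stmt8 {A U B : Type*}
    [NormedAddCommGroup A] [InnerProductSpace ℂ A]
    [NormedAddCommGroup U] [InnerProductSpace ℂ U]
    [NormedAddCommGroup B] [InnerProductSpace ℂ B]
    (f : WithLp 2 (A × U) →L[ℂ] WithLp 2 (B × U))
    (fBA : A →L[ℂ] B) (fBU : U →L[ℂ] B) (fUA : A →L[ℂ] U) (fUU : U →L[ℂ] U)
    (hblock : ∀ (x : A) (u : U),
        f ((WithLp.equiv 2 (A × U)).symm (x, u))
          = (WithLp.equiv 2 (B × U)).symm (fBA x + fBU u, fUA x + fUU u))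
    (hf : ∀ v, ‖f v‖ ≤ ‖v‖) :
    ∀ u : U, Filter.Tendsto (fun n : ℕ => ‖fBU ((fUU ^ n) u)‖) Filter.atTop (nhds 0) := by
  have hcolumn (u : U) : ‖fBU u‖ ^ 2 + ‖fUU u‖ ^ 2 ≤ ‖u‖ ^ 2 := by
    have := WithLp.norm_sq_add_norm_sq_le_of_contraction hf (hblock 0 u)
    simpa using this
  intro u
  simpa only [FunLike.coe_pow_eq_iterate] using
    tendsto_norm_comp_iterate_of_norm_sq_add_le hcolumn u
end

section
/- Let H be a finite-dimensional complex Hilbert space and f : H → H a completely nonunitary contraction, i.e. a contraction such that there is no nonzero reducing subspace on which f restricts to a unitary. Then the operator norm of f^{dim H} is strictly less than 1. -/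
/-!
The vectors on which `f ^ k` is isometric form the subspace `V k = ker (1 - (f ^ k)† f ^ k)`
(for a contraction, `‖g v‖ = ‖v‖` iff `g† g v = v`). These subspaces decrease and satisfy
`V (k + 1) = V 1 ⊓ f⁻¹ (V k)`, so once the chain stalls it is constant, and counting dimensions it
stalls by `k = dim H`. Hence `W = V (dim H)` is `f`-invariant with `f` isometric on it; in finite
dimension `f` is then onto `W`, so `f† = f⁻¹` on `W` and `W` reduces `f` to a unitary. Complete
nonunitarity forces `W = 0`, i.e. `‖f ^ dim H v‖ < ‖v‖` for `v ≠ 0`, and compactness of the unit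
sphere turns this into `‖f ^ dim H‖ < 1`.
-/

open Module ContinuousLinearMap

section IsometrySubspace

variable {𝕜 E F : Type*} [RCLike 𝕜] [NormedAddCommGroup E] [InnerProductSpace 𝕜 E]
  [CompleteSpace E] [NormedAddCommGroup F] [InnerProductSpace 𝕜 F] [CompleteSpace F]

theorem ContinuousLinearMap.adjoint_apply_apply_eq_self_iff {g : E →L[𝕜] F} (hg : ‖g‖ ≤ 1)
    (v : E) : adjoint g (g v) = v ↔ ‖g v‖ = ‖v‖ := by
  have hinner : inner 𝕜 (adjoint g (g v)) v = inner 𝕜 (g v) (g v) := adjoint_inner_left g v (g v)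
  constructor
  · intro h
    have hsq := congrArg RCLike.re hinner
    rw [h, inner_self_eq_norm_sq, inner_self_eq_norm_sq] at hsq
    exact ((sq_eq_sq₀ (norm_nonneg _) (norm_nonneg _)).1 hsq).symm
  · intro h
    have hle : ‖adjoint g (g v)‖ ≤ ‖v‖ :=
      calc ‖adjoint g (g v)‖ ≤ ‖adjoint g‖ * ‖g v‖ := le_opNorm _ _
        _ ≤ 1 * ‖v‖ := by rw [LinearIsometryEquiv.norm_map, h]; gcongr
        _ = ‖v‖ := one_mul _
    -- `‖g† g v - v‖² = ‖g† g v‖² - 2 ‖g v‖² + ‖v‖² ≤ 0`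
    have hsq : ‖adjoint g (g v) - v‖ ^ 2 ≤ 0 := by
      rw [@norm_sub_sq 𝕜, hinner, inner_self_eq_norm_sq, h]
      nlinarith [norm_nonneg (adjoint g (g v))]
    simpa [sub_eq_zero] using hsq

noncomputable def ContinuousLinearMap.isometrySubspace (g : E →L[𝕜] F) : Submodule 𝕜 E :=
  LinearMap.eqLocus ((adjoint g ∘L g : E →L[𝕜] E) : E →ₗ[𝕜] E) LinearMap.id

theorem ContinuousLinearMap.mem_isometrySubspace {g : E →L[𝕜] F} (hg : ‖g‖ ≤ 1) {v : E} :
    v ∈ g.isometrySubspace ↔ ‖g v‖ = ‖v‖ :=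
  adjoint_apply_apply_eq_self_iff hg v

end IsometrySubspace

theorem eq_succ_of_eq_succ_of_le {α : Type*} {V : ℕ → α} {Φ : α → α}
    (hΦ : ∀ k, V (k + 1) = Φ (V k)) {k m : ℕ} (h : V k = V (k + 1)) (hkm : k ≤ m) :
    V m = V (m + 1) := by
  induction m, hkm using Nat.le_induction with
  | base => exact h
  | succ m _ ih =>
    calc V (m + 1) = Φ (V m) := hΦ m
      _ = Φ (V (m + 1)) := by rw [ih]
      _ = V (m + 1 + 1) := (hΦ _).symm

theorem Submodule.exists_le_finrank_eq_succ_of_antitone {K E : Type*} [DivisionRing K]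
    [AddCommGroup E] [Module K E] [FiniteDimensional K E] {V : ℕ → Submodule K E}
    (hV : Antitone V) : ∃ k ≤ finrank K E, V k = V (k + 1) := by
  by_contra! hne
  -- each strict inclusion costs a dimension
  have hdim : ∀ k ≤ finrank K E + 1, finrank K (V k) + k ≤ finrank K E := by
    intro k hk
    induction k with
    | zero => simpa using (V 0).finrank_le
    | succ k ih =>
      have hlt := Submodule.finrank_lt_finrank_of_lt
        ((hV (Nat.le_add_right k 1)).lt_of_ne (hne k (by omega)).symm)
      have := ih (by omega)
      omega
  have := hdim _ le_rfl
  omega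

theorem Submodule.eq_succ_finrank_of_antitone {K E : Type*} [DivisionRing K]
    [AddCommGroup E] [Module K E] [FiniteDimensional K E] {V : ℕ → Submodule K E}
    (hV : Antitone V) {Φ : Submodule K E → Submodule K E} (hΦ : ∀ k, V (k + 1) = Φ (V k)) :
    V (finrank K E) = V (finrank K E + 1) :=
  have ⟨_, hk, h⟩ := exists_le_finrank_eq_succ_of_antitone hV
  eq_succ_of_eq_succ_of_le hΦ h hk

theorem ContinuousLinearMap.norm_apply_le_of_norm_le_one {𝕜 E F : Type*}
    [NontriviallyNormedField 𝕜] [NormedAddCommGroup E] [NormedSpace 𝕜 E] [NormedAddCommGroup F]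
    [NormedSpace 𝕜 F] {g : E →L[𝕜] F} (hg : ‖g‖ ≤ 1) (v : E) : ‖g v‖ ≤ ‖v‖ := by
  simpa using g.le_of_opNorm_le hg v

theorem ContinuousLinearMap.norm_pow_le_one {𝕜 E : Type*} [NontriviallyNormedField 𝕜]
    [NormedAddCommGroup E] [NormedSpace 𝕜 E] {f : E →L[𝕜] E} (hf : ‖f‖ ≤ 1) (n : ℕ) :
    ‖f ^ n‖ ≤ 1 := by
  induction n with
  | zero => exact norm_id_le
  | succ n ih =>
    rw [pow_succ]
    exact (norm_mul_le _ _).trans (mul_le_one₀ ih (norm_nonneg _) hf)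

section Contraction

variable {𝕜 E : Type*} [RCLike 𝕜] [NormedAddCommGroup E] [InnerProductSpace 𝕜 E]
  [CompleteSpace E] {f : E →L[𝕜] E}

theorem ContinuousLinearMap.antitone_isometrySubspace_pow (hf : ‖f‖ ≤ 1) :
    Antitone fun k ↦ (f ^ k).isometrySubspace := by
  intro j k hjk v hv
  rw [mem_isometrySubspace (norm_pow_le_one hf _)] at hv ⊢
  refine le_antisymm (norm_apply_le_of_norm_le_one (norm_pow_le_one hf j) v) ?_
  calc ‖v‖ = ‖(f ^ (k - j)) ((f ^ j) v)‖ := by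
        rw [← mul_apply_eq_comp, ← pow_add, Nat.sub_add_cancel hjk, hv]
    _ ≤ ‖(f ^ j) v‖ := norm_apply_le_of_norm_le_one (norm_pow_le_one hf _) _

theorem ContinuousLinearMap.isometrySubspace_pow_succ (hf : ‖f‖ ≤ 1) (k : ℕ) :
    (f ^ (k + 1)).isometrySubspace =
      f.isometrySubspace ⊓ (f ^ k).isometrySubspace.comap (f : E →ₗ[𝕜] E) := by
  ext v
  rw [Submodule.mem_inf, Submodule.mem_comap, coe_coe, mem_isometrySubspace (norm_pow_le_one hf _),
    mem_isometrySubspace hf, mem_isometrySubspace (norm_pow_le_one hf _), pow_succ,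
    mul_apply_eq_comp]
  have h₁ := norm_apply_le_of_norm_le_one (norm_pow_le_one hf k) (f v)
  have h₂ := norm_apply_le_of_norm_le_one hf v
  constructor
  · intro h
    constructor <;> linarith
  · rintro ⟨h, h'⟩
    rw [h', h]

end Contraction

section Reducing

variable {𝕜 E : Type*} [RCLike 𝕜] [NormedAddCommGroup E] [InnerProductSpace 𝕜 E]
  {K : Submodule 𝕜 E} [FiniteDimensional 𝕜 K] {g : E →L[𝕜] E}

theorem Submodule.exists_mem_apply_eq_of_isometric (hmaps : ∀ x ∈ K, g x ∈ K)
    (hisom : ∀ x ∈ K, ‖g x‖ = ‖x‖) : ∀ y ∈ K, ∃ x ∈ K, g x = y := by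
  let g' : K →ₗ[𝕜] K := (g : E →ₗ[𝕜] E).restrict hmaps
  have hinj : Function.Injective g' := by
    refine (injective_iff_map_eq_zero g').2 fun x hx ↦ ?_
    have hx' : g x = 0 := congrArg Subtype.val hx
    exact Subtype.ext <| norm_eq_zero.1 <| by rw [← hisom x x.2, hx', norm_zero]
  intro y hy
  obtain ⟨x, hx⟩ := LinearMap.injective_iff_surjective.1 hinj ⟨y, hy⟩
  exact ⟨x, x.2, congrArg Subtype.val hx⟩

theorem Submodule.adjoint_apply_mem_of_isometric [CompleteSpace E] (hg : ‖g‖ ≤ 1)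
    (hmaps : ∀ x ∈ K, g x ∈ K) (hisom : ∀ x ∈ K, ‖g x‖ = ‖x‖) :
    ∀ y ∈ K, adjoint g y ∈ K := by
  intro y hy
  obtain ⟨x, hx, rfl⟩ := exists_mem_apply_eq_of_isometric hmaps hisom y hy
  rwa [(adjoint_apply_apply_eq_self_iff hg x).2 (hisom x hx)]

end Reducing

theorem ContinuousLinearMap.norm_lt_one_of_forall_norm_apply_lt {𝕜 E F : Type*} [RCLike 𝕜]
    [NormedAddCommGroup E] [NormedSpace 𝕜 E] [FiniteDimensional 𝕜 E] [Nontrivial E]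
    [NormedAddCommGroup F] [NormedSpace 𝕜 F] (T : E →L[𝕜] F) (hT : ∀ v ≠ 0, ‖T v‖ < ‖v‖) :
    ‖T‖ < 1 := by
  have : NormedSpace ℝ E := NormedSpace.restrictScalars ℝ 𝕜 E
  have : ProperSpace E := FiniteDimensional.proper_rclike 𝕜 E
  rw [← sSup_sphere_eq_norm, (isCompact_sphere 0 1).sSup_lt_iff_of_continuous
    (NormedSpace.sphere_nonempty.2 zero_le_one) T.continuous.norm.continuousOn]
  intro v hv
  rw [mem_sphere_zero_iff_norm] at hv
  simpa [hv] using hT v (by rintro rfl; simp at hv)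

/-- A completely nonunitary contraction `f` on a finite-dimensional complex Hilbert space `H`
(no nonzero reducing subspace on which `f` restricts to a unitary) satisfies
`‖f ^ (dim H)‖ < 1`. -/
theorem stmt9 {H : Type*} [NormedAddCommGroup H] [InnerProductSpace ℂ H]
    [FiniteDimensional ℂ H]
    (f : H →L[ℂ] H) (hf : ∀ v, ‖f v‖ ≤ ‖v‖)
    (hcnu : ∀ K : Submodule ℂ H,
        (∀ x ∈ K, f x ∈ K) → (∀ x ∈ K, ContinuousLinearMap.adjoint f x ∈ K) →
        (∀ x ∈ K, ‖f x‖ = ‖x‖) → (∀ y ∈ K, ∃ x ∈ K, f x = y) → K = ⊥) :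
    ‖f ^ Module.finrank ℂ H‖ < 1 := by
  have hf₁ : ‖f‖ ≤ 1 := f.opNorm_le_bound zero_le_one (by simpa using hf)
  set W := (f ^ finrank ℂ H).isometrySubspace
  have hW : W ≤ f.isometrySubspace ⊓ W.comap (f : H →ₗ[ℂ] H) := by
    rw [← isometrySubspace_pow_succ hf₁]
    exact (Submodule.eq_succ_finrank_of_antitone (antitone_isometrySubspace_pow hf₁)
      (Φ := fun V ↦ f.isometrySubspace ⊓ V.comap (f : H →ₗ[ℂ] H))
      (isometrySubspace_pow_succ hf₁)).le
  have hmaps : ∀ x ∈ W, f x ∈ W := fun x hx ↦ (hW hx).2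
  have hisom : ∀ x ∈ W, ‖f x‖ = ‖x‖ := fun x hx ↦ (mem_isometrySubspace hf₁).1 (hW hx).1
  have hW_bot : W = ⊥ := hcnu W hmaps (W.adjoint_apply_mem_of_isometric hf₁ hmaps hisom) hisom
    (W.exists_mem_apply_eq_of_isometric hmaps hisom)
  rcases subsingleton_or_nontrivial H with _ | _
  · simp [opNorm_subsingleton]
  refine norm_lt_one_of_forall_norm_apply_lt _ fun v hv ↦ ?_
  refine (norm_apply_le_of_norm_le_one (norm_pow_le_one hf₁ _) v).lt_of_ne fun h ↦ hv ?_
  rw [← Submodule.mem_bot ℂ, ← hW_bot]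
  exact (mem_isometrySubspace (norm_pow_le_one hf₁ _)).2 h
end

section
/- (Sz.-Nagy–Foias canonical decomposition, finite-dimensional case) Every contraction f : H → H on a Hilbert space H has a unique reducing subspace H₀ such that f restricted to H₀ is unitary and f restricted to the orthogonal complement H₁ is completely nonunitary; moreover H₀ = {v ∈ H | ∀ n ∈ ℕ, ‖f^n(v)‖ = ‖v‖ = ‖(f†)^n(v)‖}. -/
/-!
For a contraction `g`, the equality `‖g v‖ = ‖v‖` forces `g† (g v) = v`. Hence, for a
contraction `f`, the set of vectors on which all powers of `f` and `f†` preserve norms is an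
intersection of kernels, so a closed subspace, and `f` and `f†` are mutually inverse isometries
on it. Conversely, on any subspace where `f` restricts to a unitary, `f†` is the inverse of `f`,
so all powers of `f` and `f†` preserve norms there: the subspace is the largest one on which `f`
is unitary. This gives complete nonunitarity of the complement, and uniqueness: for another
candidate `H₀' ≤ H₀`, the part `H₀ ⊓ H₀'ᗮ` is again a unitary reducing subspace, orthogonal to
`H₀'`, hence zero.
-/

open Submodule

namespace ContinuousLinearMap

section Normed

variable {𝕜 E : Type*} [RCLike 𝕜] [NormedAddCommGroup E] [NormedSpace 𝕜 E] {f : E →L[𝕜] E}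

lemma norm_pow_apply_le (hf : ∀ v, ‖f v‖ ≤ ‖v‖) (n : ℕ) (v : E) : ‖(f ^ n) v‖ ≤ ‖v‖ := by
  induction n generalizing v with
  | zero => simp
  | succ n ih => rw [pow_succ, mul_apply_eq_comp]; exact (ih (f v)).trans (hf v)

lemma norm_pow_apply_of_mapsTo {s : Set E} (hs : ∀ x ∈ s, f x ∈ s)
    (hi : ∀ x ∈ s, ‖f x‖ = ‖x‖) {x : E} (hx : x ∈ s) (n : ℕ) : ‖(f ^ n) x‖ = ‖x‖ := by
  induction n generalizing x with
  | zero => simp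
  | succ n ih => rw [pow_succ, mul_apply_eq_comp, ih (hs x hx), hi x hx]

end Normed

variable {𝕜 E : Type*} [RCLike 𝕜] [NormedAddCommGroup E] [InnerProductSpace 𝕜 E]
  [CompleteSpace E] {f : E →L[𝕜] E}

lemma adjoint_pow (f : E →L[𝕜] E) (n : ℕ) : adjoint (f ^ n) = adjoint f ^ n := by
  rw [← star_eq_adjoint, ← star_eq_adjoint, star_pow]

lemma norm_adjoint_apply_le (hf : ∀ v, ‖f v‖ ≤ ‖v‖) (v : E) : ‖adjoint f v‖ ≤ ‖v‖ := by
  have hf1 : ‖adjoint f‖ ≤ 1 := by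
    rw [adjoint.norm_map]
    exact f.opNorm_le_bound zero_le_one (by simpa using hf)
  simpa using (adjoint f).le_of_opNorm_le hf1 v

lemma adjoint_apply_apply_eq_self_iff_s10 (hf : ∀ v, ‖f v‖ ≤ ‖v‖) {v : E} :
    adjoint f (f v) = v ↔ ‖f v‖ = ‖v‖ := by
  constructor
  · intro h
    have hsq := f.apply_norm_sq_eq_inner_adjoint_left v
    rw [comp_apply, h, inner_self_eq_norm_sq] at hsq
    exact (pow_left_inj₀ (norm_nonneg _) (norm_nonneg _) two_ne_zero).1 hsq
  · intro h
    have hsq : ‖adjoint f (f v) - v‖ ^ 2 ≤ 0 := by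
      rw [norm_sub_sq (𝕜 := 𝕜), adjoint_inner_left, inner_self_eq_norm_sq, h]
      nlinarith [norm_adjoint_apply_le hf (f v), norm_nonneg (adjoint f (f v))]
    rw [← sub_eq_zero, ← norm_eq_zero]
    exact pow_eq_zero_iff two_ne_zero |>.1 (le_antisymm hsq (sq_nonneg _))

lemma apply_mem_orthogonal {K : Submodule 𝕜 E} (hK : ∀ x ∈ K, adjoint f x ∈ K) {v : E}
    (hv : v ∈ Kᗮ) : f v ∈ Kᗮ := fun u hu => by
  rw [← adjoint_inner_left]
  exact hv _ (hK u hu)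

lemma adjoint_apply_mem_orthogonal {K : Submodule 𝕜 E} (hK : ∀ x ∈ K, f x ∈ K) {v : E}
    (hv : v ∈ Kᗮ) : adjoint f v ∈ Kᗮ := fun u hu => by
  rw [adjoint_inner_right]
  exact hv _ (hK u hu)

structure IsUnitaryReducing (f : E →L[𝕜] E) (K : Submodule 𝕜 E) : Prop where
  isClosed : IsClosed (K : Set E)
  apply_mem : ∀ x ∈ K, f x ∈ K
  adjoint_apply_mem : ∀ x ∈ K, adjoint f x ∈ K
  norm_apply : ∀ x ∈ K, ‖f x‖ = ‖x‖
  exists_apply_eq : ∀ y ∈ K, ∃ x ∈ K, f x = y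

lemma IsUnitaryReducing.apply_adjoint_apply (hf : ∀ v, ‖f v‖ ≤ ‖v‖) {K : Submodule 𝕜 E}
    (hK : IsUnitaryReducing f K) {y : E} (hy : y ∈ K) : f (adjoint f y) = y := by
  obtain ⟨x, hx, rfl⟩ := hK.exists_apply_eq y hy
  rw [(adjoint_apply_apply_eq_self_iff_s10 hf).2 (hK.norm_apply x hx)]

lemma IsUnitaryReducing.orthogonal_inf (hf : ∀ v, ‖f v‖ ≤ ‖v‖) {H₀ K : Submodule 𝕜 E}
    (hH₀f : ∀ x ∈ H₀, f x ∈ H₀) (hH₀adj : ∀ x ∈ H₀, adjoint f x ∈ H₀) (hK : IsUnitaryReducing f K) :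
    IsUnitaryReducing f (H₀ᗮ ⊓ K) := by
  have hadj : ∀ x ∈ H₀ᗮ ⊓ K, adjoint f x ∈ H₀ᗮ ⊓ K := fun x ⟨hx₀, hx⟩ =>
    ⟨adjoint_apply_mem_orthogonal hH₀f hx₀, hK.adjoint_apply_mem x hx⟩
  refine ⟨?_, fun x ⟨hx₀, hx⟩ => ⟨apply_mem_orthogonal hH₀adj hx₀, hK.apply_mem x hx⟩, hadj,
    fun x hx => hK.norm_apply x hx.2,
    fun y hy => ⟨adjoint f y, hadj y hy, hK.apply_adjoint_apply hf hy.2⟩⟩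
  rw [coe_inf]
  exact H₀.isClosed_orthogonal.inter hK.isClosed

noncomputable def unitaryPart (f : E →L[𝕜] E) : Submodule 𝕜 E :=
  ⨅ n : ℕ, (adjoint f ^ n * f ^ n - 1).ker ⊓ (f ^ n * adjoint f ^ n - 1).ker

lemma isClosed_unitaryPart (f : E →L[𝕜] E) : IsClosed (unitaryPart f : Set E) := by
  rw [unitaryPart, coe_iInf]
  exact isClosed_iInter fun n => (isClosed_ker _).inter (isClosed_ker _)

lemma mem_unitaryPart_iff (hf : ∀ v, ‖f v‖ ≤ ‖v‖) {v : E} :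
    v ∈ unitaryPart f ↔ ∀ n : ℕ, ‖(f ^ n) v‖ = ‖v‖ ∧ ‖(adjoint f ^ n) v‖ = ‖v‖ := by
  simp only [unitaryPart, mem_iInf, mem_inf, LinearMap.mem_ker, coe_coe, sub_apply,
    mul_apply_eq_comp, sub_eq_zero]
  refine forall_congr' fun n => and_congr ?_ ?_
  · rw [← adjoint_pow]
    exact adjoint_apply_apply_eq_self_iff_s10 (norm_pow_apply_le hf n)
  · have := adjoint_apply_apply_eq_self_iff_s10 (v := v)
      (norm_pow_apply_le (norm_adjoint_apply_le hf) n)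
    rwa [adjoint_pow, adjoint_adjoint] at this

lemma unitaryPart_adjoint (hf : ∀ v, ‖f v‖ ≤ ‖v‖) : unitaryPart (adjoint f) = unitaryPart f := by
  ext v
  rw [mem_unitaryPart_iff (norm_adjoint_apply_le hf), mem_unitaryPart_iff hf, adjoint_adjoint]
  exact forall_congr' fun n => and_comm

lemma apply_mem_unitaryPart (hf : ∀ v, ‖f v‖ ≤ ‖v‖) {v : E} (hv : v ∈ unitaryPart f) :
    f v ∈ unitaryPart f := by
  rw [mem_unitaryPart_iff hf] at hv ⊢
  have hfv : ‖f v‖ = ‖v‖ := by simpa using (hv 1).1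
  intro n
  rw [hfv]
  refine ⟨by rw [← mul_apply_eq_comp, ← pow_succ]; exact (hv (n + 1)).1, ?_⟩
  cases n with
  | zero => simpa using hfv
  | succ n =>
    rw [pow_succ, mul_apply_eq_comp, (adjoint_apply_apply_eq_self_iff_s10 hf).2 hfv]
    exact (hv n).2

lemma adjoint_apply_mem_unitaryPart (hf : ∀ v, ‖f v‖ ≤ ‖v‖) {v : E} (hv : v ∈ unitaryPart f) :
    adjoint f v ∈ unitaryPart f := by
  rw [← unitaryPart_adjoint hf] at hv ⊢
  exact apply_mem_unitaryPart (norm_adjoint_apply_le hf) hv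

lemma isUnitaryReducing_unitaryPart (hf : ∀ v, ‖f v‖ ≤ ‖v‖) :
    IsUnitaryReducing f (unitaryPart f) where
  isClosed := isClosed_unitaryPart f
  apply_mem _ := apply_mem_unitaryPart hf
  adjoint_apply_mem _ := adjoint_apply_mem_unitaryPart hf
  norm_apply _ hx := by simpa using ((mem_unitaryPart_iff hf).1 hx 1).1
  exists_apply_eq y hy := by
    refine ⟨adjoint f y, adjoint_apply_mem_unitaryPart hf hy, ?_⟩
    have hfy : ‖adjoint f y‖ = ‖y‖ := by simpa using ((mem_unitaryPart_iff hf).1 hy 1).2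
    simpa using (adjoint_apply_apply_eq_self_iff_s10 (norm_adjoint_apply_le hf)).2 hfy

lemma le_unitaryPart (hf : ∀ v, ‖f v‖ ≤ ‖v‖) {K : Submodule 𝕜 E} (hKf : ∀ x ∈ K, f x ∈ K)
    (hKi : ∀ x ∈ K, ‖f x‖ = ‖x‖) (hKs : ∀ y ∈ K, ∃ x ∈ K, f x = y) : K ≤ unitaryPart f := by
  have hKadj : ∀ x ∈ K, adjoint f x ∈ K ∧ ‖adjoint f x‖ = ‖x‖ := by
    intro x hx
    obtain ⟨y, hy, rfl⟩ := hKs x hx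
    rw [(adjoint_apply_apply_eq_self_iff_s10 hf).2 (hKi y hy)]
    exact ⟨hy, (hKi y hy).symm⟩
  intro x hx
  rw [mem_unitaryPart_iff hf]
  exact fun n => ⟨norm_pow_apply_of_mapsTo hKf hKi hx n,
    norm_pow_apply_of_mapsTo (fun x hx => (hKadj x hx).1) (fun x hx => (hKadj x hx).2) hx n⟩

lemma eq_bot_of_le_orthogonal_unitaryPart (hf : ∀ v, ‖f v‖ ≤ ‖v‖) {K : Submodule 𝕜 E}
    (hKf : ∀ x ∈ K, f x ∈ K) (hKi : ∀ x ∈ K, ‖f x‖ = ‖x‖) (hKs : ∀ y ∈ K, ∃ x ∈ K, f x = y)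
    (hKo : K ≤ (unitaryPart f)ᗮ) : K = ⊥ :=
  eq_bot_iff.2 <| (le_inf (le_unitaryPart hf hKf hKi hKs) hKo).trans (inf_orthogonal_eq_bot _).le

lemma eq_unitaryPart (hf : ∀ v, ‖f v‖ ≤ ‖v‖) {H₀ : Submodule 𝕜 E} (hH₀ : IsUnitaryReducing f H₀)
    (hcnu : ∀ K, IsUnitaryReducing f K → K ≤ H₀ᗮ → K = ⊥) : H₀ = unitaryPart f := by
  have hle := le_unitaryPart hf hH₀.apply_mem hH₀.norm_apply hH₀.exists_apply_eq
  have hbot : H₀ᗮ ⊓ unitaryPart f = ⊥ := hcnu _ ((isUnitaryReducing_unitaryPart hf).orthogonal_inf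
    hf hH₀.apply_mem hH₀.adjoint_apply_mem) inf_le_left
  have : CompleteSpace H₀ := hH₀.isClosed.completeSpace_coe
  rw [← sup_orthogonal_inf_of_hasOrthogonalProjection hle, hbot, sup_bot_eq]

end ContinuousLinearMap

open ContinuousLinearMap

/-- Sz.-Nagy–Foias canonical decomposition: every contraction `f` on a Hilbert space `H`
has a unique closed reducing subspace `H₀` on which `f` restricts to a unitary and such that
the restriction of `f` to the orthogonal complement is completely nonunitary; moreover
`H₀ = {v | ∀ n, ‖fⁿ v‖ = ‖v‖ = ‖(f†)ⁿ v‖}`. -/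
theorem stmt10 {H : Type*} [NormedAddCommGroup H] [InnerProductSpace ℂ H] [CompleteSpace H]
    (f : H →L[ℂ] H) (hf : ∀ v, ‖f v‖ ≤ ‖v‖) :
    ∃ H₀ : Submodule ℂ H,
      (H₀ : Set H) =
        {v : H | ∀ n : ℕ, ‖(f ^ n) v‖ = ‖v‖ ∧ ‖(ContinuousLinearMap.adjoint f ^ n) v‖ = ‖v‖} ∧
      IsClosed (H₀ : Set H) ∧
      (∀ x ∈ H₀, f x ∈ H₀) ∧ (∀ x ∈ H₀, ContinuousLinearMap.adjoint f x ∈ H₀) ∧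
      (∀ x ∈ H₀, ‖f x‖ = ‖x‖) ∧ (∀ y ∈ H₀, ∃ x ∈ H₀, f x = y) ∧
      (∀ K : Submodule ℂ H, IsClosed (K : Set H) → K ≤ H₀ᗮ →
          (∀ x ∈ K, f x ∈ K) → (∀ x ∈ K, ContinuousLinearMap.adjoint f x ∈ K) →
          (∀ x ∈ K, ‖f x‖ = ‖x‖) → (∀ y ∈ K, ∃ x ∈ K, f x = y) → K = ⊥) ∧
      (∀ H₀' : Submodule ℂ H, IsClosed (H₀' : Set H) →
          (∀ x ∈ H₀', f x ∈ H₀') → (∀ x ∈ H₀', ContinuousLinearMap.adjoint f x ∈ H₀') →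
          (∀ x ∈ H₀', ‖f x‖ = ‖x‖) → (∀ y ∈ H₀', ∃ x ∈ H₀', f x = y) →
          (∀ K : Submodule ℂ H, IsClosed (K : Set H) → K ≤ H₀'ᗮ →
              (∀ x ∈ K, f x ∈ K) → (∀ x ∈ K, ContinuousLinearMap.adjoint f x ∈ K) →
              (∀ x ∈ K, ‖f x‖ = ‖x‖) → (∀ y ∈ K, ∃ x ∈ K, f x = y) → K = ⊥) →
          H₀' = H₀) := by
  have hS := isUnitaryReducing_unitaryPart hf
  refine ⟨unitaryPart f, Set.ext fun v => mem_unitaryPart_iff hf, hS.isClosed, hS.apply_mem,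
    hS.adjoint_apply_mem, hS.norm_apply, hS.exists_apply_eq,
    fun K _ hKo hKf _ hKi hKs => eq_bot_of_le_orthogonal_unitaryPart hf hKf hKi hKs hKo, ?_⟩
  intro H₀ hc hH₀f hH₀adj hH₀i hH₀s hcnu
  exact eq_unitaryPart hf ⟨hc, hH₀f, hH₀adj, hH₀i, hH₀s⟩ fun K hK hKo =>
    hcnu K hK.isClosed hKo hK.apply_mem hK.adjoint_apply_mem hK.norm_apply hK.exists_apply_eq
end

section
/- Let f : A ⊕ U → B ⊕ U be a contraction between finite-dimensional complex Hilbert spaces. Then there exist linear maps i : A → U and k : U → B such that f_{UA} = (id − f_{UU}) ∘ i and f_{BU} = k ∘ (id − f_{UU}). Equivalently, im(f_{UA}) ⊆ im(id − f_{UU}) and ker(id − f_{UU}) ⊆ ker(f_{BU}). -/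
/-!
If `fUU u = u`, then `f (0, u) = (fBU u, u)` has norm at most `‖u‖`, which in the `L²` product
forces `fBU u = 0`; so `ker (1 - fUU) ≤ ker fBU`, and in finite dimensions `fBU` factors
through `1 - fUU`. The adjoint `f†` is again a contraction, with blocks `fBA†, fUA†, fBU†, fUU†`;
the same argument factors `fUA†` through `1 - fUU†`, and taking adjoints factors `fUA` through
`1 - fUU` on the other side.
-/

open ContinuousLinearMap
open scoped InnerProduct

theorem LinearMap.exists_comp_eq_of_ker_le {K V V' W : Type*} [DivisionRing K]
    [AddCommGroup V] [Module K V] [AddCommGroup V'] [Module K V'] [AddCommGroup W] [Module K W]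
    {T : V →ₗ[K] V'} {S : V →ₗ[K] W} (h : ker T ≤ ker S) : ∃ k : V' →ₗ[K] W, k ∘ₗ T = S := by
  obtain ⟨k, hk⟩ := exists_extend ((ker T).liftQ S h ∘ₗ T.quotKerEquivRange.symm.toLinearMap)
  refine ⟨k, ext fun v => ?_⟩
  simpa using congr($hk ⟨T v, mem_range_self T v⟩)

theorem ContinuousLinearMap.exists_comp_eq_of_ker_le {𝕜 E F G : Type*} [NontriviallyNormedField 𝕜]
    [CompleteSpace 𝕜] [NormedAddCommGroup E] [NormedSpace 𝕜 E] [NormedAddCommGroup F]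
    [NormedSpace 𝕜 F] [FiniteDimensional 𝕜 F] [NormedAddCommGroup G] [NormedSpace 𝕜 G]
    {T : E →L[𝕜] F} {S : E →L[𝕜] G} (h : T.ker ≤ S.ker) : ∃ k : F →L[𝕜] G, S = k ∘L T := by
  obtain ⟨k, hk⟩ := LinearMap.exists_comp_eq_of_ker_le h
  exact ⟨k.toContinuousLinearMap, ext fun v => congr($hk.symm v)⟩

theorem WithLp.eq_zero_of_norm_toLp_le {E F : Type*} [NormedAddCommGroup E]
    [SeminormedAddCommGroup F] {x : E} {y : F} (h : ‖WithLp.toLp 2 (x, y)‖ ≤ ‖y‖) : x = 0 := by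
  have hsq := WithLp.prod_norm_sq_eq_of_L2 (WithLp.toLp 2 (x, y))
  rw [WithLp.toLp_fst, WithLp.toLp_snd] at hsq
  have hx : ‖x‖ ^ 2 ≤ 0 := by nlinarith [norm_nonneg (WithLp.toLp 2 (x, y))]
  simpa using hx

section Blocks

variable {𝕜 A U B : Type*} [RCLike 𝕜]
  [NormedAddCommGroup A] [InnerProductSpace 𝕜 A]
  [NormedAddCommGroup U] [InnerProductSpace 𝕜 U]
  [NormedAddCommGroup B] [InnerProductSpace 𝕜 B]

def HasBlocks (f : WithLp 2 (A × U) →L[𝕜] WithLp 2 (B × U))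
    (fBA : A →L[𝕜] B) (fBU : U →L[𝕜] B) (fUA : A →L[𝕜] U) (fUU : U →L[𝕜] U) : Prop :=
  ∀ (x : A) (u : U), f (WithLp.toLp 2 (x, u)) = WithLp.toLp 2 (fBA x + fBU u, fUA x + fUU u)

variable {f : WithLp 2 (A × U) →L[𝕜] WithLp 2 (B × U)}
  {fBA : A →L[𝕜] B} {fBU : U →L[𝕜] B} {fUA : A →L[𝕜] U} {fUU : U →L[𝕜] U}

theorem HasBlocks.ker_one_sub_le_ker (hblock : HasBlocks f fBA fBU fUA fUU) (hf : ‖f‖ ≤ 1) :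
    (1 - fUU).ker ≤ fBU.ker := by
  intro u hu
  have hfix : fUU u = u := (sub_eq_zero.mp hu).symm
  refine WithLp.eq_zero_of_norm_toLp_le (y := u) ?_
  calc ‖WithLp.toLp 2 (fBU u, u)‖ = ‖f (WithLp.toLp 2 (0, u))‖ := by simp [hblock _ u, hfix]
    _ ≤ ‖WithLp.toLp 2 ((0 : A), u)‖ := (f.le_of_opNorm_le hf _).trans_eq (one_mul _)
    _ = ‖u‖ := WithLp.norm_toLp_snd _ _ _ u

theorem HasBlocks.adjoint [CompleteSpace A] [CompleteSpace U] [CompleteSpace B]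
    (hblock : HasBlocks f fBA fBU fUA fUU) :
    HasBlocks (f†) (fBA†) (fUA†) (fBU†) (fUU†) := by
  intro y w
  refine ext_inner_right 𝕜 fun z => ?_
  rcases z with ⟨x, u⟩
  rw [adjoint_inner_left, hblock]
  simp only [WithLp.prod_inner_apply, inner_add_left, inner_add_right, adjoint_inner_left]
  ring

theorem HasBlocks.exists_eq_comp_one_sub [FiniteDimensional 𝕜 U]
    (hblock : HasBlocks f fBA fBU fUA fUU) (hf : ‖f‖ ≤ 1) :
    ∃ k : U →L[𝕜] B, fBU = k ∘L (1 - fUU) :=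
  ContinuousLinearMap.exists_comp_eq_of_ker_le (hblock.ker_one_sub_le_ker hf)

theorem HasBlocks.exists_eq_one_sub_comp [CompleteSpace A] [FiniteDimensional 𝕜 U]
    [CompleteSpace B] (hblock : HasBlocks f fBA fBU fUA fUU) (hf : ‖f‖ ≤ 1) :
    ∃ i : A →L[𝕜] U, fUA = (1 - fUU) ∘L i := by
  have := FiniteDimensional.complete 𝕜 U
  obtain ⟨k, hk⟩ := hblock.adjoint.exists_eq_comp_one_sub (by rwa [LinearIsometryEquiv.norm_map])
  refine ⟨k†, ?_⟩
  rw [← adjoint_adjoint fUA, hk, adjoint_comp, map_sub, adjoint_adjoint, adjoint_one]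

end Blocks

/-- For a contraction `f : A ⊕ U → B ⊕ U` between finite-dimensional complex Hilbert spaces
with blocks `f_{BA}, f_{BU}, f_{UA}, f_{UU}`, there exist linear maps `i : A → U` and
`k : U → B` with `f_{UA} = (id − f_{UU}) ∘ i` and `f_{BU} = k ∘ (id − f_{UU})`; equivalently,
`im(f_{UA}) ⊆ im(id − f_{UU})` and `ker(id − f_{UU}) ⊆ ker(f_{BU})`. -/
theorem stmt12 {A U B : Type*}
    [NormedAddCommGroup A] [InnerProductSpace ℂ A] [FiniteDimensional ℂ A]
    [NormedAddCommGroup U] [InnerProductSpace ℂ U] [FiniteDimensional ℂ U]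
    [NormedAddCommGroup B] [InnerProductSpace ℂ B] [FiniteDimensional ℂ B]
    (f : WithLp 2 (A × U) →L[ℂ] WithLp 2 (B × U))
    (fBA : A →L[ℂ] B) (fBU : U →L[ℂ] B) (fUA : A →L[ℂ] U) (fUU : U →L[ℂ] U)
    (hblock : ∀ (x : A) (u : U),
        f ((WithLp.equiv 2 (A × U)).symm (x, u))
          = (WithLp.equiv 2 (B × U)).symm (fBA x + fBU u, fUA x + fUU u))
    (hf : ∀ v, ‖f v‖ ≤ ‖v‖) :
    (∃ i : A →L[ℂ] U, fUA = (1 - fUU) ∘L i) ∧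
    (∃ k : U →L[ℂ] B, fBU = k ∘L (1 - fUU)) ∧
    LinearMap.range (fUA : A →ₗ[ℂ] U) ≤ LinearMap.range (((1 - fUU : U →L[ℂ] U)) : U →ₗ[ℂ] U) ∧
    LinearMap.ker (((1 - fUU : U →L[ℂ] U)) : U →ₗ[ℂ] U) ≤ LinearMap.ker (fBU : U →ₗ[ℂ] B) := by
  have hblocks : HasBlocks f fBA fBU fUA fUU := hblock
  have hcontr : ‖f‖ ≤ 1 := f.opNorm_le_bound zero_le_one (by simpa using hf)
  obtain ⟨i, hi⟩ := hblocks.exists_eq_one_sub_comp hcontr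
  refine ⟨⟨i, hi⟩, hblocks.exists_eq_comp_one_sub hcontr, ?_, hblocks.ker_one_sub_le_ker hcontr⟩
  rw [hi]
  exact LinearMap.range_comp_le_range _ _
end

section
/- (Weak-measurement collapse bound for Grover) Fix κ ∈ [0,1] and set ξ = √(1−κ). For an angle a with tan defined, define the collapse angle θ(a,κ) by tan(a − θ) = ξ tan(a), i.e. θ(a,κ) = arctan((1 − ξ) tan a / (1 + ξ tan² a)) in the first quadrant. Then for all angles a, |sin θ(a,κ)| ≤ (1−ξ)/(1+ξ), and consequently |θ(a,κ)| ≤ arcsin((1−ξ)/(1+ξ)) ≤ arcsin κ. -/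
/-!
Writing `t = tan a`, the collapse angle is `arctan x` with `x = (1 - ξ) t / (1 + ξ t²)`.
AM-GM gives `4 ξ t² ≤ (1 + ξ t²)²`, hence `4 ξ x² ≤ (1 - ξ)²`, which is exactly the condition
`x² / (1 + x²) ≤ ((1 - ξ) / (1 + ξ))²` for `sin² (arctan x)`. Since `arctan x` lies in
`(-π/2, π/2)`, where `arcsin ∘ sin` is the identity, the sine bound becomes the angle bound, and
`(1 - ξ) / (1 + ξ) ≤ 1 - ξ² = κ` finishes by monotonicity of `arcsin`.
-/

open Real Set

/-- `tan θ` for the collapse angle `θ`, as a function of `ξ` and `t = tan a`. -/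
noncomputable def collapseTan (ξ t : ℝ) : ℝ := (1 - ξ) * t / (1 + ξ * t ^ 2)

lemma four_mul_mul_collapseTan_sq_le {ξ : ℝ} (hξ : 0 ≤ ξ) (t : ℝ) :
    4 * ξ * collapseTan ξ t ^ 2 ≤ (1 - ξ) ^ 2 := by
  have hD : 0 < 1 + ξ * t ^ 2 := by positivity
  have amgm : 4 * ξ * t ^ 2 ≤ (1 + ξ * t ^ 2) ^ 2 := by
    nlinarith [sq_nonneg (1 - ξ * t ^ 2)]
  calc 4 * ξ * collapseTan ξ t ^ 2
      = (1 - ξ) ^ 2 * (4 * ξ * t ^ 2 / (1 + ξ * t ^ 2) ^ 2) := by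
        rw [collapseTan]; field_simp
    _ ≤ (1 - ξ) ^ 2 * 1 := by
        gcongr
        exact (div_le_one (by positivity)).2 amgm
    _ = (1 - ξ) ^ 2 := mul_one _

lemma abs_sin_arctan_le {x c : ℝ} (hc : 0 ≤ c) (h : x ^ 2 ≤ c ^ 2 * (1 + x ^ 2)) :
    |sin (arctan x)| ≤ c :=
  abs_le_of_sq_le_sq (by rwa [sin_sq_arctan, div_le_iff₀ (by positivity)]) hc

lemma abs_sin_arctan_collapseTan_le {ξ : ℝ} (hξ0 : 0 ≤ ξ) (hξ1 : ξ ≤ 1) (t : ℝ) :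
    |sin (arctan (collapseTan ξ t))| ≤ (1 - ξ) / (1 + ξ) := by
  apply abs_sin_arctan_le (div_nonneg (by linarith) (by linarith))
  rw [div_pow, div_mul_eq_mul_div, le_div_iff₀ (by positivity)]
  nlinarith [four_mul_mul_collapseTan_sq_le hξ0 t]

lemma abs_le_arcsin_of_abs_sin_le {θ c : ℝ} (hθ : θ ∈ Ioo (-(π / 2)) (π / 2))
    (h : |sin θ| ≤ c) : |θ| ≤ arcsin c := by
  refine abs_le'.2 ⟨?_, ?_⟩
  · exact (le_arcsin_iff_sin_le' ⟨hθ.1, hθ.2.le⟩).2 ((le_abs_self _).trans h)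
  · refine (le_arcsin_iff_sin_le' ⟨neg_lt_neg hθ.2, neg_le.1 hθ.1.le⟩).2 ?_
    rw [sin_neg]
    exact (neg_le_abs _).trans h

lemma one_sub_div_one_add_le_one_sub_sq {ξ : ℝ} (hξ0 : 0 ≤ ξ) (hξ1 : ξ ≤ 1) :
    (1 - ξ) / (1 + ξ) ≤ 1 - ξ ^ 2 := by
  rw [div_le_iff₀ (by linarith)]
  nlinarith [mul_nonneg (sub_nonneg.2 hξ1) hξ0, mul_nonneg (mul_nonneg (sub_nonneg.2 hξ1) hξ0) hξ0]

/-- Weak-measurement collapse bound for Grover: fix `κ ∈ [0,1]`, set `ξ = √(1−κ)` and define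
the collapse angle `θ(a,κ) = arctan((1 − ξ) tan a / (1 + ξ tan² a))`.  Then for every angle
`a`, `|sin θ(a,κ)| ≤ (1−ξ)/(1+ξ)`, hence `|θ(a,κ)| ≤ arcsin((1−ξ)/(1+ξ)) ≤ arcsin κ`. -/
theorem stmt17 (κ : ℝ) (hκ : κ ∈ Set.Icc (0 : ℝ) 1)
    (ξ : ℝ) (hξ : ξ = Real.sqrt (1 - κ))
    (θ : ℝ → ℝ)
    (hθ : ∀ a : ℝ, θ a = Real.arctan ((1 - ξ) * Real.tan a / (1 + ξ * Real.tan a ^ 2))) :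
    ∀ a : ℝ,
      |Real.sin (θ a)| ≤ (1 - ξ) / (1 + ξ) ∧
      |θ a| ≤ Real.arcsin ((1 - ξ) / (1 + ξ)) ∧
      Real.arcsin ((1 - ξ) / (1 + ξ)) ≤ Real.arcsin κ := by
  intro a
  obtain ⟨hκ0, hκ1⟩ := hκ
  have hξ0 : 0 ≤ ξ := hξ ▸ sqrt_nonneg _
  have hξsq : ξ ^ 2 = 1 - κ := by rw [hξ, sq_sqrt (by linarith)]
  have hξ1 : ξ ≤ 1 := by nlinarith
  have hθa : θ a = arctan (collapseTan ξ (tan a)) := hθ a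
  have hsin : |sin (θ a)| ≤ (1 - ξ) / (1 + ξ) :=
    hθa ▸ abs_sin_arctan_collapseTan_le hξ0 hξ1 _
  refine ⟨hsin, abs_le_arcsin_of_abs_sin_le (hθa ▸ arctan_mem_Ioo _) hsin, monotone_arcsin ?_⟩
  calc (1 - ξ) / (1 + ξ) ≤ 1 - ξ ^ 2 := one_sub_div_one_add_le_one_sub_sq hξ0 hξ1
    _ = κ := by rw [hξsq]; ring
end
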